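/- arXiv:1606.05445 — 2 statements merged into one kernel-verified Lean document; each statement's English description precedes it below -/
import Mathlib

section
/- In a standard quasi-metric space X,d, if a directed family of formal balls (x_i, r_i) has supremum (x, r), then for every real s ≥ -r, the family (x_i, r_i + s) has supremum (x, r + s). -/
open scoped ENNReal NNReal Classical

/-- A formal ball: a point together with a non-negative real radius. -/
structure FormalBall (X : Type*) where
  center : X
  radius : ℝ≥0

/-- A quasi-metric on `X`: a `[0,∞]`-valued distance with `d x x = 0`, the triangle
inequality, and `d x y = d y x = 0 → x = y`. -/
structure QuasiMetric (X : Type*) where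
  d : X → X → ℝ≥0∞
  refl : ∀ x, d x x = 0
  triangle : ∀ x y z, d x z ≤ d x y + d y z
  separated : ∀ x y, d x y = 0 → d y x = 0 → x = y

/-- The order on formal balls: `(x,r) ≤ (y,s)` iff `d x y ≤ r - s`
(equivalently `s ≤ r` and `d x y ≤ r - s`). -/
def ballLE {X : Type*} (q : QuasiMetric X) (b c : FormalBall X) : Prop :=
  c.radius ≤ b.radius ∧ q.d b.center c.center ≤ ↑(b.radius - c.radius)

/-- The partial order of formal balls `B(X,d)`. -/
def ballOrder {X : Type*} (q : QuasiMetric X) : PartialOrder (FormalBall X) where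
  le := ballLE q
  le_refl b := ⟨le_rfl, by simp [ballLE, q.refl]⟩
  le_trans a b c hab hbc := ⟨hbc.1.trans hab.1, by
    calc q.d a.center c.center ≤ q.d a.center b.center + q.d b.center c.center :=
          q.triangle _ _ _
      _ ≤ ↑(a.radius - b.radius) + ↑(b.radius - c.radius) := add_le_add hab.2 hbc.2
      _ = ↑(a.radius - c.radius) := by
          rw [← ENNReal.coe_add, tsub_add_tsub_cancel hab.1 hbc.1]⟩
  le_antisymm a b hab hba := by
    have hr : b.radius = a.radius := le_antisymm hab.1 hba.1
    have h1 : q.d a.center b.center = 0 := le_antisymm (by simpa [hr] using hab.2) bot_le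
    have h2 : q.d b.center a.center = 0 := le_antisymm (by simpa [hr] using hba.2) bot_le
    have hc := q.separated _ _ h1 h2
    cases a; cases b; simp_all

/-- Standardness: a directed family of formal balls has a supremum iff the family with all
radii uniformly shifted by `s` has one. -/
def Standard {X : Type*} (q : QuasiMetric X) : Prop :=
  letI := ballOrder q
  ∀ S : Set (FormalBall X), S.Nonempty → DirectedOn (· ≤ ·) S → ∀ s : ℝ≥0,
    ((∃ b, IsLUB S b) ↔
      ∃ b, IsLUB ((fun c : FormalBall X => FormalBall.mk c.center (c.radius + s)) '' S) b)

/-!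
For `t ≥ 0`, adding `t` to the radius is an order embedding of formal balls whose range, the
balls of radius `≥ t`, is a lower set. Standardness gives the shifted family some supremum `b'`;
it lies below the shifted supremum of the family, hence is itself a shifted ball, and since the
embedding reflects upper bounds, `b'` is the shifted supremum. A shift by `-t` with `t ≤ r`
inverts the shift by `t` on balls of radius `≥ t`, which contain the family because they contain
its supremum.
-/

open Set

section OrderEmbedding

variable {α β : Type*}

theorem OrderEmbedding.isLUB_image_of_isLowerSet_range [Preorder α] [Preorder β] (f : α ↪o β)
    (hf : IsLowerSet (range f)) {S : Set α} {a : α} (ha : IsLUB S a)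
    (hS : ∃ b, IsLUB (f '' S) b) : IsLUB (f '' S) (f a) := by
  obtain ⟨b, hb⟩ := hS
  have hfa : f a ∈ upperBounds (f '' S) := f.monotone.mem_upperBounds_image ha.1
  obtain ⟨a', rfl⟩ := hf (hb.2 hfa) (mem_range_self a)
  have haa' : a ≤ a' := ha.2 fun c hc => f.le_iff_le.1 (hb.1 (mem_image_of_mem f hc))
  exact ⟨hfa, fun u hu => (f.monotone haa').trans (hb.2 hu)⟩

theorem OrderEmbedding.exists_isLUB_preimage [Preorder α] [PartialOrder β] (f : α ↪o β)
    (hf : IsLowerSet (range f)) {S : Set β} {b : β} (hb : IsLUB S b) (hbf : b ∈ range f)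
    (hS : ∃ a, IsLUB (f ⁻¹' S) a) : ∃ a, f a = b ∧ IsLUB (f ⁻¹' S) a := by
  obtain ⟨a, ha⟩ := hS
  have himage : f '' (f ⁻¹' S) = S := image_preimage_eq_of_subset fun c hc => hf (hb.1 hc) hbf
  have hfa := f.isLUB_image_of_isLowerSet_range hf ha ⟨b, by rwa [himage]⟩
  exact ⟨a, (himage ▸ hfa).unique hb, ha⟩

theorem DirectedOn.preimage_orderEmbedding [Preorder α] [Preorder β] (f : α ↪o β) {S : Set β}
    (hS : DirectedOn (· ≤ ·) S) (hSf : S ⊆ range f) : DirectedOn (· ≤ ·) (f ⁻¹' S) := by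
  intro x hx y hy
  obtain ⟨z, hz, hxz, hyz⟩ := hS _ hx _ hy
  obtain ⟨w, rfl⟩ := hSf hz
  exact ⟨w, hz, f.le_iff_le.1 hxz, f.le_iff_le.1 hyz⟩

end OrderEmbedding

namespace FormalBall

variable {X : Type*}

def shift (t : ℝ≥0) (c : FormalBall X) : FormalBall X := ⟨c.center, c.radius + t⟩

def shiftReal (s : ℝ) (c : FormalBall X) : FormalBall X :=
  ⟨c.center, ((c.radius : ℝ) + s).toNNReal⟩

theorem shiftReal_coe (t : ℝ≥0) : shiftReal (X := X) t = shift t := by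
  funext c
  simp [shiftReal, shift]

theorem shiftReal_neg_shift (t : ℝ≥0) (c : FormalBall X) : shiftReal (-t) (shift t c) = c := by
  simp [shiftReal, shift]

theorem mem_range_shift_iff {t : ℝ≥0} {c : FormalBall X} : c ∈ range (shift t) ↔ t ≤ c.radius :=
  ⟨by rintro ⟨a, rfl⟩; exact le_add_self,
    fun h => ⟨⟨c.center, c.radius - t⟩, by simp [shift, tsub_add_cancel_of_le h]⟩⟩

variable (q : QuasiMetric X)

theorem ballLE_shift_iff (t : ℝ≥0) (a c : FormalBall X) :
    ballLE q (shift t a) (shift t c) ↔ ballLE q a c := by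
  simp only [ballLE, shift, add_le_add_iff_right, add_tsub_add_eq_tsub_right]

def shiftOrderEmbedding (t : ℝ≥0) : letI := ballOrder q; FormalBall X ↪o FormalBall X :=
  letI := ballOrder q
  OrderEmbedding.ofMapLEIff (shift t) (ballLE_shift_iff q t)

@[simp]
theorem coe_shiftOrderEmbedding (t : ℝ≥0) : ⇑(shiftOrderEmbedding q t) = shift t := rfl

theorem isLowerSet_range_shiftOrderEmbedding (t : ℝ≥0) :
    letI := ballOrder q; IsLowerSet (range (shiftOrderEmbedding q t)) := by
  intro a c hca ha
  exact mem_range_shift_iff.2 ((mem_range_shift_iff.1 ha).trans hca.1)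

end FormalBall

open FormalBall in
/-- in a standard quasi-metric space, if a directed family `(x_i,r_i)` has
supremum `(x,r)`, then for every real `s ≥ -r` the family `(x_i, r_i + s)` has supremum
`(x, r + s)`. -/
theorem lub_shift_real {X : Type*} (q : QuasiMetric X) (hstd : Standard q)
    (S : Set (FormalBall X)) (hne : S.Nonempty)
    (hdir : letI := ballOrder q; DirectedOn (· ≤ ·) S)
    (b : FormalBall X) (hlub : letI := ballOrder q; IsLUB S b)
    (s : ℝ) (hs : -(b.radius : ℝ) ≤ s) :
    letI := ballOrder q
    IsLUB ((fun c : FormalBall X =>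
        FormalBall.mk c.center (((c.radius : ℝ) + s).toNNReal)) '' S)
      ⟨b.center, ((b.radius : ℝ) + s).toNNReal⟩ := by
  let := ballOrder q
  change IsLUB (shiftReal s '' S) (shiftReal s b)
  obtain ⟨t, rfl | rfl⟩ : ∃ t : ℝ≥0, s = t ∨ s = -t := by
    rcases le_total 0 s with h | h
    · exact ⟨s.toNNReal, .inl (Real.coe_toNNReal s h).symm⟩
    · exact ⟨(-s).toNNReal, .inr (by simp [h])⟩
  · rw [shiftReal_coe]
    exact (shiftOrderEmbedding q t).isLUB_image_of_isLowerSet_range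
      (isLowerSet_range_shiftOrderEmbedding q t) hlub ((hstd S hne hdir t).1 ⟨b, hlub⟩)
  · set f := shiftOrderEmbedding q t
    have hf := isLowerSet_range_shiftOrderEmbedding q t
    have hbf : b ∈ range f := mem_range_shift_iff.2 (by exact_mod_cast neg_le_neg_iff.1 hs)
    have hSf : S ⊆ range f := fun c hc => hf (hlub.1 hc) hbf
    have himage : f '' (f ⁻¹' S) = S := image_preimage_eq_of_subset hSf
    have hlub' : ∃ a, IsLUB (f ⁻¹' S) a := by
      refine (hstd _ ?_ (hdir.preimage_orderEmbedding f hSf) t).2 ⟨b, ?_⟩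
      · exact hne.preimage' hSf
      · rw [← himage] at hlub
        exact hlub
    obtain ⟨a, rfl, ha⟩ := f.exists_isLUB_preimage hf hlub hbf hlub'
    rw [← himage, image_image]
    simpa only [f, coe_shiftOrderEmbedding, shiftReal_neg_shift, image_id'] using ha
end

section
/- Let X,d be a standard quasi-metric space, x ∈ X a d-finite point, r ∈ ℝ≥0 and ε > 0. Then the set {(y,s) : d(x,y) - r + s < ε} is Scott-open in the poset of formal balls B(X,d). -/
open scoped ENNReal NNReal Classical

/-- Scott-open: upward closed and inaccessible by suprema of nonempty directed sets. -/
def ScottOpen {α : Type*} [Preorder α] (U : Set α) : Prop :=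
  (∀ a ∈ U, ∀ b, a ≤ b → b ∈ U) ∧
  ∀ S : Set α, S.Nonempty → DirectedOn (· ≤ ·) S → ∀ a, IsLUB S a → a ∈ U → (S ∩ U).Nonempty

/-! Upward closure of the ball is the triangle inequality. For inaccessibility, let a directed
family `(y_i, s_i)` have supremum `(y, s)` in the ball. Standardness lets us lower every radius
by `s`, giving a directed family with supremum `(y, 0)`; since `x` is `d`-finite, `d x y` is then
the infimum of `d x y_i + s_i - s`, so `d x y + s < r + ε` forces some `(y_i, s_i)` into the
ball. -/

def DFinite {X : Type*} (q : QuasiMetric X) (x : X) : Prop :=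
  ∀ S : Set (FormalBall X), S.Nonempty →
    (letI := ballOrder q; DirectedOn (· ≤ ·) S) →
    ∀ y : X, (letI := ballOrder q; IsLUB S ⟨y, 0⟩) →
      q.d x y = ⨅ b ∈ S, (q.d x b.center + (b.radius : ℝ≥0∞))

namespace FormalBall

variable {X : Type*}

def addRadius (b : FormalBall X) (s : ℝ≥0) : FormalBall X := ⟨b.center, b.radius + s⟩

def subRadius (b : FormalBall X) (s : ℝ≥0) : FormalBall X := ⟨b.center, b.radius - s⟩

theorem addRadius_subRadius {b : FormalBall X} {s : ℝ≥0} (hs : s ≤ b.radius) :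
    (b.subRadius s).addRadius s = b := by
  simp [addRadius, subRadius, tsub_add_cancel_of_le hs]

theorem addRadius_injective (s : ℝ≥0) : Function.Injective (addRadius (X := X) · s) := by
  rintro ⟨y, r⟩ ⟨z, t⟩ h
  simp only [addRadius, mk.injEq, add_left_inj] at h
  rw [h.1, h.2]

end FormalBall

open FormalBall

section Shift

variable {X : Type*} (q : QuasiMetric X)

theorem ballLE_addRadius_iff {b c : FormalBall X} (s : ℝ≥0) :
    ballLE q (b.addRadius s) (c.addRadius s) ↔ ballLE q b c := by
  simp only [ballLE, addRadius, add_le_add_iff_right, add_tsub_add_eq_tsub_right]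

theorem ballLE_subRadius_iff {b : FormalBall X} {s : ℝ≥0} (hs : s ≤ b.radius)
    (c : FormalBall X) : ballLE q (b.subRadius s) c ↔ ballLE q b (c.addRadius s) := by
  conv_rhs => rw [← addRadius_subRadius hs]
  exact (ballLE_addRadius_iff q s).symm

theorem dist_add_radius_le_of_ballLE (x : X) {b c : FormalBall X} (h : ballLE q b c) :
    q.d x c.center + c.radius ≤ q.d x b.center + b.radius :=
  calc q.d x c.center + c.radius
      ≤ q.d x b.center + q.d b.center c.center + c.radius := by
        gcongr; exact q.triangle _ _ _
    _ ≤ q.d x b.center + ↑(b.radius - c.radius) + c.radius := by gcongr; exact h.2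
    _ = q.d x b.center + b.radius := by
        rw [add_assoc, ← ENNReal.coe_add, tsub_add_cancel_of_le h.1]

variable {q} {S : Set (FormalBall X)} {s : ℝ≥0}

theorem directedOn_image_subRadius (hs : ∀ b ∈ S, s ≤ b.radius)
    (hdir : DirectedOn (ballLE q) S) : DirectedOn (ballLE q) ((subRadius · s) '' S) := by
  refine directedOn_image.2 (hdir.mono' fun b hb c hc hbc => ?_)
  rwa [Order.Preimage, ballLE_subRadius_iff q (hs b hb), addRadius_subRadius (hs c hc)]

theorem image_addRadius_image_subRadius (hs : ∀ b ∈ S, s ≤ b.radius) :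
    (addRadius · s) '' ((subRadius · s) '' S) = S := by
  rw [Set.image_image]
  exact (Set.image_congr fun b hb => addRadius_subRadius (hs b hb)).trans (Set.image_id' S)

theorem isLUB_image_subRadius (hstd : Standard q) (hS : S.Nonempty)
    (hdir : DirectedOn (ballLE q) S) {y : X} (hlub : letI := ballOrder q; IsLUB S ⟨y, s⟩) :
    letI := ballOrder q; IsLUB ((subRadius · s) '' S) ⟨y, 0⟩ := by
  let := ballOrder q
  have hs : ∀ b ∈ S, s ≤ b.radius := fun b hb => (hlub.1 hb).1
  set T := (subRadius · s) '' S
  have hT : (addRadius · s) '' T = S := image_addRadius_image_subRadius hs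
  have hshift : ∀ {c : FormalBall X}, c.addRadius s ∈ upperBounds S ↔ c ∈ upperBounds T := by
    intro c
    simp only [T, upperBounds, Set.forall_mem_image, Set.mem_ofPred_eq]
    exact forall₂_congr fun b hb => (ballLE_subRadius_iff q (hs b hb) c).symm
  obtain ⟨b, hb⟩ := (hstd T (hS.image _) (directedOn_image_subRadius hs hdir) s).2
    ⟨⟨y, s⟩, hT ▸ hlub⟩
  have hy0 : (⟨y, 0⟩ : FormalBall X) ∈ upperBounds T :=
    hshift.1 (by simpa [addRadius] using hlub.1)
  -- `b + s ≤ (y, 0) + s = (y, s) ≤ b + s`, and shifting radii is injective.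
  have hy0s : (⟨y, 0⟩ : FormalBall X).addRadius s = ⟨y, s⟩ := by simp [addRadius]
  have hbs : b.addRadius s = ⟨y, s⟩ :=
    le_antisymm (hy0s ▸ (ballLE_addRadius_iff q s).2 (hb.2 hy0)) (hlub.2 (hshift.2 hb.1))
  have hby : b = ⟨y, 0⟩ := addRadius_injective s (by simpa [addRadius] using hbs)
  exact hby ▸ hb

end Shift

theorem scottOpen_dist_add_radius_lt {X : Type*} {q : QuasiMetric X} (hstd : Standard q)
    {x : X} (hfin : DFinite q x) (t : ℝ≥0∞) :
    letI := ballOrder q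
    ScottOpen {b : FormalBall X | q.d x b.center + (b.radius : ℝ≥0∞) < t} := by
  let := ballOrder q
  refine ⟨fun b hb c hbc => (dist_add_radius_le_of_ballLE q x hbc).trans_lt hb, ?_⟩
  rintro S hS hdir ⟨y, s⟩ hlub (hys : q.d x y + s < t)
  have hs : ∀ b ∈ S, s ≤ b.radius := fun b hb => (hlub.1 hb).1
  have hinf := hfin _ (hS.image _) (directedOn_image_subRadius hs hdir) y
    (isLUB_image_subRadius hstd hS hdir hlub)
  rw [← lt_tsub_iff_right, hinf] at hys
  obtain ⟨_, ⟨b, hb, rfl⟩, hlt⟩ := by simpa only [iInf_lt_iff] using hys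
  refine ⟨b, hb, ?_⟩
  rw [lt_tsub_iff_right, add_assoc, ← ENNReal.coe_add] at hlt
  simpa [subRadius, tsub_add_cancel_of_le (hs b hb)] using hlt

theorem ball_scottOpen_of_dFinite_general {X : Type*} (q : QuasiMetric X) (hstd : Standard q)
    (x : X)
    (hfin : ∀ S : Set (FormalBall X), S.Nonempty →
      (letI := ballOrder q; DirectedOn (· ≤ ·) S) →
      ∀ y : X, (letI := ballOrder q; IsLUB S ⟨y, 0⟩) →
        q.d x y = ⨅ b ∈ S, (q.d x b.center + (b.radius : ℝ≥0∞)))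
    (r ε : ℝ≥0) :
    letI := ballOrder q
    ScottOpen {b : FormalBall X |
      q.d x b.center + (b.radius : ℝ≥0∞) < (r : ℝ≥0∞) + (ε : ℝ≥0∞)} :=
  scottOpen_dist_add_radius_lt hstd hfin _

/-- in a standard quasi-metric space, if `x` is `d`-finite, then for all
`r ∈ ℝ≥0` and `ε > 0` the `d⁺`-open ball `{(y,s) : d(x,y) - r + s < ε}` (equivalently
`{(y,s) : d(x,y) + s < r + ε}`) is Scott-open in `B(X,d)`. -/
theorem ball_scottOpen_of_dFinite {X : Type*} (q : QuasiMetric X) (hstd : Standard q)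
    (x : X)
    (hfin : ∀ S : Set (FormalBall X), S.Nonempty →
      (letI := ballOrder q; DirectedOn (· ≤ ·) S) →
      ∀ y : X, (letI := ballOrder q; IsLUB S ⟨y, 0⟩) →
        q.d x y = ⨅ b ∈ S, (q.d x b.center + (b.radius : ℝ≥0∞)))
    (r ε : ℝ≥0) (hε : 0 < ε) :
    letI := ballOrder q
    ScottOpen {b : FormalBall X |
      q.d x b.center + (b.radius : ℝ≥0∞) < (r : ℝ≥0∞) + (ε : ℝ≥0∞)} :=
  ball_scottOpen_of_dFinite_general q hstd x hfin r ε
end
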